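/- Let λ be a dominant weight, w an element of the Weyl group W, and define the Demazure weight polytope P = conv_ℚ{xλ : x ≤ w} in the rational weight space. If s is a simple reflection with sw < w in Bruhat order, then s(P) = P. -/

import Mathlib

open CoxeterSystem

variable {B W : Type*} [Group W] {M : CoxeterMatrix B}

/-- The Bruhat order on a Coxeter group, via the subword property:
`u ≤ w` iff some reduced word for `w` has a subword whose product is `u`. -/
def BruhatLE (cs : CoxeterSystem M W) (u w : W) : Prop :=
  ∃ l : List B, cs.IsReduced l ∧ cs.wordProd l = w ∧
    ∃ l' : List B, List.Sublist l' l ∧ cs.wordProd l' = u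

/-- A realization of a Coxeter group `W` as the Weyl group of a root system `Φ`
in a rational vector space `V`, with positive roots `Φpos`, simple roots `α i`,
coroots, and the `W`-action `ρ`. -/
structure WeylRootSetup {B W : Type*} [Group W] {M : CoxeterMatrix B}
    (cs : CoxeterSystem M W) (V : Type*) [AddCommGroup V] [Module ℚ V] where
  /-- the action of `W` on the weight space -/
  ρ : W →* (V ≃ₗ[ℚ] V)
  /-- the simple roots -/
  α : B → V
  /-- the coroot attached to a root, as a linear functional on weights -/
  coroot : V → Module.Dual ℚ V
  /-- the set of roots -/
  Φ : Set V
  /-- the set of positive roots -/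
  Φpos : Set V
  simple_mem : ∀ i : B, α i ∈ Φpos
  pos_subset : Φpos ⊆ Φ
  neg_mem : ∀ β ∈ Φ, -β ∈ Φ
  pos_or_neg : ∀ β ∈ Φ, β ∈ Φpos ∨ -β ∈ Φpos
  not_both : ∀ β : V, ¬(β ∈ Φpos ∧ -β ∈ Φpos)
  stable : ∀ u : W, ∀ β ∈ Φ, ρ u β ∈ Φ
  simple_act : ∀ (i : B) (x : V), ρ (cs.simple i) x = x - coroot (α i) x • α i
  coroot_two : ∀ β ∈ Φ, coroot β β = 2
  coroot_equiv : ∀ (u : W) (β x : V), coroot (ρ u β) x = coroot β (ρ u⁻¹ x)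

/-!
For `s w < w`, the lifting property of the Bruhat order says that `u ≤ w` implies `s u ≤ w`.
Hence `s` permutes the vertices `u λ` (`u ≤ w`) and, being linear, maps their convex hull onto
itself.

The lifting property is easy for the chain description of the Bruhat order (generated by
`t w ≤ w` for reflections `t` with `ℓ (t w) < ℓ w`), and the chain order agrees with the subword
order of the statement; both facts rest on the strong exchange condition. That condition is Tits'
argument: `s i` acting on `W × ZMod 2` by `(x, e) ↦ (s i x s i, e + [x = s i])` satisfies the
Coxeter relations, so the parity of the number of occurrences of a reflection `t` in the left
inversion sequence of a word depends only on its product, and it is odd for the word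
`r ++ c :: r.reverse` of `t`.
-/

theorem MulAut.count_map_conj {G : Type*} [Group G] [DecidableEq G] (g t : G) (l : List G) :
    (l.map (MulAut.conj g)).count (MulAut.conj g t) = l.count t :=
  List.count_map_of_injective _ _ (MulAut.conj g).injective _

namespace CoxeterSystem

open scoped Classical

variable (cs : CoxeterSystem M W)

local prefix:100 "s" => cs.simple
local prefix:100 "π" => cs.wordProd
local prefix:100 "ℓ" => cs.length
local prefix:100 "lis" => cs.leftInvSeq

theorem simple_mul_mul_simple_eq_simple_iff (i : B) (x : W) :
    s i * x * s i = s i ↔ x = s i := by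
  constructor
  · intro h; simpa [mul_assoc] using congrArg (s i * · * s i) h
  · rintro rfl; simp

noncomputable def signPerm (i : B) : Equiv.Perm (W × ZMod 2) :=
  Function.Involutive.toPerm
    (fun p => (s i * p.1 * s i, p.2 + if p.1 = s i then 1 else 0))
    (by
      rintro ⟨x, e⟩
      ext
      · simp [mul_assoc]
      · simp only [simple_mul_mul_simple_eq_simple_iff, add_assoc, CharTwo.add_self_eq_zero,
          add_zero])

theorem signPerm_apply (i : B) (x : W) (e : ZMod 2) :
    cs.signPerm i (x, e) = (s i * x * s i, e + if x = s i then 1 else 0) := rfl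

theorem prod_map_signPerm_apply (ω : List B) (x : W) (e : ZMod 2) :
    (ω.map cs.signPerm).prod (x, e) =
      (π ω * x * (π ω)⁻¹, e + (lis ω).count (π ω * x * (π ω)⁻¹)) := by
  induction ω with
  | nil => simp
  | cons i ω ih =>
    set y := π ω * x * (π ω)⁻¹
    have hy : π (i :: ω) * x * (π (i :: ω))⁻¹ = MulAut.conj (s i) y := by
      simp [y, wordProd_cons, mul_assoc]
    have hcount : (lis (i :: ω)).count (MulAut.conj (s i) y)
        = (lis ω).count y + if y = s i then 1 else 0 := by
      rw [leftInvSeq, List.count_cons, MulAut.count_map_conj]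
      simp only [beq_iff_eq, MulAut.conj_apply, cs.inv_simple, @eq_comm _ (s i),
        simple_mul_mul_simple_eq_simple_iff]
    rw [List.map_cons, List.prod_cons, Equiv.Perm.mul_apply, ih, signPerm_apply, hy, hcount]
    simp only [MulAut.conj_apply, cs.inv_simple, Nat.cast_add, add_assoc]
    split_ifs <;> simp

theorem prod_map_alternatingWord_two_mul {G : Type*} [Monoid G] (f : B → G) (i j : B) (m : ℕ) :
    ((alternatingWord i j (2 * m)).map f).prod = (f i * f j) ^ m := by
  induction m with
  | zero => simp [alternatingWord]
  | succ m ih =>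
    rw [show 2 * (m + 1) = 2 * m + 1 + 1 by ring, alternatingWord_succ, alternatingWord_succ]
    simp [← mul_assoc, ih, pow_succ]

theorem wordProd_alternatingWord_add_two_mul (i j : B) (m : ℕ) :
    π (alternatingWord j i (m + 2 * M i j)) = π (alternatingWord j i m) := by
  have hparity : Even (m + 2 * M i j) ↔ Even m := by simp [Nat.even_add]
  have hhalf : (m + 2 * M i j) / 2 = m / 2 + M i j := by omega
  simp only [prod_alternatingWord_eq_mul_pow, hparity, hhalf, pow_add, simple_mul_simple_pow',
    mul_one]

theorem even_count_leftInvSeq_alternatingWord (i j : B) (t : W) :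
    Even ((lis (alternatingWord i j (2 * M i j))).count t) := by
  set L := lis (alternatingWord i j (2 * M i j))
  have hlen : L.length = 2 * M i j := by simp [L]
  have hperiodic : L.drop (M i j) = L.take (M i j) := by
    apply List.ext_getElem (by simp [hlen]; omega)
    intro k hk _
    simp only [List.getElem_drop, List.getElem_take, L]
    rw [getElem_leftInvSeq_alternatingWord, getElem_leftInvSeq_alternatingWord,
      show 2 * (M i j + k) + 1 = 2 * k + 1 + 2 * M i j by ring,
      wordProd_alternatingWord_add_two_mul]
    all_goals simp at hk; omega
  rw [← List.take_append_drop (M i j) L, List.count_append, hperiodic]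
  exact ⟨_, rfl⟩

theorem isLiftable_signPerm : M.IsLiftable cs.signPerm := by
  intro i j
  have hone : π (alternatingWord i j (2 * M i j)) = 1 := by
    rw [wordProd, prod_map_alternatingWord_two_mul, simple_mul_simple_pow]
  ext ⟨x, e⟩ : 1
  rw [← prod_map_alternatingWord_two_mul, prod_map_signPerm_apply, hone, one_mul, inv_one,
    mul_one, (ZMod.natCast_eq_zero_iff_even).mpr (even_count_leftInvSeq_alternatingWord cs i j x),
    add_zero]
  rfl

noncomputable def signHom : W →* Equiv.Perm (W × ZMod 2) :=
  cs.lift ⟨cs.signPerm, cs.isLiftable_signPerm⟩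

theorem signHom_wordProd (ω : List B) : cs.signHom (π ω) = (ω.map cs.signPerm).prod := by
  rw [wordProd, map_list_prod, List.map_map]
  congr 1
  exact List.map_congr_left fun i _ => cs.lift_apply_simple cs.isLiftable_signPerm i

theorem natCast_count_leftInvSeq_eq {ω ω' : List B} (h : π ω = π ω') (t : W) :
    ((lis ω).count t : ZMod 2) = (lis ω').count t := by
  have key := congrArg (fun φ : Equiv.Perm (W × ZMod 2) => (φ ((π ω)⁻¹ * t * π ω, 0)).2)
    (congrArg cs.signHom h)
  simp only [signHom_wordProd, prod_map_signPerm_apply] at key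
  simpa [← h, mul_assoc] using key

theorem leftInvSeq_append (ω ω' : List B) :
    lis (ω ++ ω') = lis ω ++ (lis ω').map (MulAut.conj (π ω)) := by
  induction ω with
  | nil => simp
  | cons i ω ih =>
    simp [leftInvSeq, ih, wordProd_cons, Function.comp_def, mul_assoc]

theorem count_leftInvSeq_append (ω ω' : List B) (t : W) :
    (lis (ω ++ ω')).count t = (lis ω).count t + (lis ω').count ((π ω)⁻¹ * t * π ω) := by
  rw [leftInvSeq_append, List.count_append, ← MulAut.count_map_conj (π ω) ((π ω)⁻¹ * t * π ω)]
  simp [mul_assoc]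

theorem natCast_count_leftInvSeq_reflection (r : List B) (c : B) :
    ((lis (r ++ c :: r.reverse)).count (π r * s c * (π r)⁻¹) : ZMod 2) = 1 := by
  set t := π r * s c * (π r)⁻¹
  have hconj : (π r)⁻¹ * t * π r = s c := by simp [t, mul_assoc]
  have hpalindrome : (lis (r ++ c :: r.reverse)).count t
      = (lis r).count t + 1 + (lis r.reverse).count (s c) := by
    rw [count_leftInvSeq_append, hconj, ← List.singleton_append, count_leftInvSeq_append]
    simp [add_assoc]
  have hreturn : (lis (r ++ r.reverse)).count t = (lis r).count t + (lis r.reverse).count (s c) := by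
    rw [count_leftInvSeq_append, hconj]
  have hzero : ((lis (r ++ r.reverse)).count t : ZMod 2) = 0 := by
    simpa using cs.natCast_count_leftInvSeq_eq (ω' := []) (by simp [wordProd_append]) t
  rw [hpalindrome, add_right_comm, ← hreturn]
  push_cast
  rw [hzero, zero_add]

theorem mem_leftInvSeq_of_isLeftInversion {ω : List B} {t : W}
    (ht : cs.IsLeftInversion (π ω) t) : t ∈ lis ω := by
  obtain ⟨hrefl, hlt⟩ := ht
  obtain ⟨v, c, htv⟩ := id hrefl
  obtain ⟨r, rfl⟩ := cs.wordProd_surjective v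
  obtain ⟨τ, hτ, hτπ⟩ := cs.exists_isReduced (t * π ω)
  have hnot : t ∉ lis τ := fun hmem => by
    have hinv := (cs.isLeftInversion_of_mem_leftInvSeq hτ hmem).2
    rw [← hτπ, ← mul_assoc, hrefl.mul_self, one_mul] at hinv
    omega
  have hρ : π (r ++ c :: r.reverse) = t := by
    rw [htv, wordProd_append, wordProd_cons, wordProd_reverse, mul_assoc]
  have hword : π ((r ++ c :: r.reverse) ++ τ) = π ω := by
    rw [wordProd_append, hρ, ← hτπ, ← mul_assoc, hrefl.mul_self, one_mul]
  have hodd : ((lis ω).count t : ZMod 2) = 1 := by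
    rw [← cs.natCast_count_leftInvSeq_eq hword, count_leftInvSeq_append, hρ, hrefl.inv,
      hrefl.mul_self, one_mul, List.count_eq_zero_of_not_mem hnot, add_zero, htv]
    exact cs.natCast_count_leftInvSeq_reflection r c
  exact List.count_pos_iff.mp (Nat.pos_of_ne_zero fun h0 => by simp [h0] at hodd)

theorem exists_eraseIdx_of_isLeftInversion {ω : List B} {t : W}
    (ht : cs.IsLeftInversion (π ω) t) : ∃ j < ω.length, t * π ω = π (ω.eraseIdx j) := by
  obtain ⟨j, hj, rfl⟩ := List.mem_iff_getElem.mp (cs.mem_leftInvSeq_of_isLeftInversion ht)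
  refine ⟨j, by simpa using hj, ?_⟩
  rw [← List.getD_eq_getElem _ 1 hj, getD_leftInvSeq_mul_wordProd]

theorem exists_isReduced_sublist (ω : List B) :
    ∃ τ, τ.Sublist ω ∧ cs.IsReduced τ ∧ π τ = π ω := by
  induction ω with
  | nil => exact ⟨[], .slnil, by simp [IsReduced], rfl⟩
  | cons i ω ih =>
    obtain ⟨τ, hsub, hred, hπ⟩ := ih
    have hlen : ℓ (π τ) = τ.length := hred
    rcases cs.length_simple_mul (π τ) i with hup | hdown
    · refine ⟨i :: τ, hsub.cons_cons i, ?_, by rw [wordProd_cons, wordProd_cons, hπ]⟩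
      simp [IsReduced, wordProd_cons, hup, hlen]
    · obtain ⟨j, hj, heq⟩ :=
        cs.exists_eraseIdx_of_isLeftInversion (ω := τ) ⟨cs.isReflection_simple i, by omega⟩
      refine ⟨τ.eraseIdx j, ((τ.eraseIdx_sublist j).trans hsub).cons i, ?_, ?_⟩
      · have := List.length_eraseIdx_add_one hj
        simp only [IsReduced]
        rw [← heq]
        omega
      · rw [← heq, hπ, wordProd_cons]

def IsBruhatStep (u w : W) : Prop := ∃ t, cs.IsLeftInversion w t ∧ u = t * w

def BruhatChainLE : W → W → Prop := Relation.ReflTransGen cs.IsBruhatStep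

theorem isBruhatStep_simple_mul {w : W} {i : B} (hi : ℓ (s i * w) < ℓ w) :
    cs.IsBruhatStep (s i * w) w :=
  ⟨s i, ⟨cs.isReflection_simple i, hi⟩, rfl⟩

theorem eq_or_length_lt_of_isLeftInversion_simple_mul {u t : W} {i : B}
    (hu : ℓ u < ℓ (s i * u)) (ht : cs.IsLeftInversion (s i * u) t) :
    t * (s i * u) = u ∨ ℓ (s i * (t * (s i * u))) < ℓ u := by
  obtain ⟨ω, hω, rfl⟩ := cs.exists_isReduced u
  have hred : cs.IsReduced (i :: ω) := by
    have : ℓ (π ω) = ω.length := hω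
    simp only [IsReduced, wordProd_cons, List.length_cons]
    rcases cs.length_simple_mul (π ω) i with h | h <;> omega
  rw [← wordProd_cons] at ht ⊢
  obtain ⟨j, hj, heq⟩ := cs.exists_eraseIdx_of_isLeftInversion ht
  rw [heq]
  rcases j with _ | k
  · left; rfl
  · right
    simp only [List.eraseIdx_cons_succ, wordProd_cons, simple_mul_simple_cancel_left]
    have := cs.length_wordProd_le (ω.eraseIdx k)
    have := List.length_eraseIdx_add_one (l := ω) (i := k) (by simpa using hj)
    have : ℓ (π ω) = ω.length := hω
    omega

variable {cs} in
theorem IsBruhatStep.simple_mul_or {u w : W} (h : cs.IsBruhatStep u w) (i : B) :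
    cs.BruhatChainLE (s i * u) w ∨ cs.BruhatChainLE (s i * u) (s i * w) := by
  obtain ⟨t, ⟨ht, hlt⟩, rfl⟩ := h
  rcases cs.length_simple_mul (t * w) i with hup | hdown
  · by_cases heq : s i * (t * w) = w
    · left; rw [heq]; exact .refl
    · right
      apply Relation.ReflTransGen.single
      set t' := s i * t * (s i)⁻¹
      have ht' : cs.IsReflection t' := ht.conj (s i)
      have hmul : t' * (s i * w) = s i * (t * w) := by simp [t', mul_assoc]
      have hback : t' * (s i * (t * w)) = s i * w := by
        simp only [t', cs.inv_simple, mul_assoc, cs.simple_mul_simple_cancel_left]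
        rw [← mul_assoc t t w, ht.mul_self, one_mul]
      refine ⟨t', ⟨ht', ?_⟩, hmul.symm⟩
      have hne := ht'.length_mul_right_ne (s i * (t * w))
      rw [hback] at hne
      rw [hmul]
      by_contra hge
      rcases cs.eq_or_length_lt_of_isLeftInversion_simple_mul (u := t * w) (i := i) (by omega)
          ⟨ht', by rw [hback]; omega⟩ with h | h
      · rw [hback] at h
        exact heq (by rw [← h, simple_mul_simple_cancel_left])
      · rw [hback, simple_mul_simple_cancel_left] at h
        omega
  · left
    exact .head (cs.isBruhatStep_simple_mul (by omega)) (.single ⟨t, ⟨ht, hlt⟩, rfl⟩)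

variable {cs} in
theorem BruhatChainLE.simple_mul_or {u w : W} (h : cs.BruhatChainLE u w) (i : B) :
    cs.BruhatChainLE (s i * u) w ∨ cs.BruhatChainLE (s i * u) (s i * w) := by
  induction h using Relation.ReflTransGen.head_induction_on with
  | refl => exact Or.inr .refl
  | head hstep hchain ih =>
    rcases hstep.simple_mul_or i with hle | hle
    · exact Or.inl (hle.trans hchain)
    · exact ih.imp hle.trans hle.trans

theorem bruhatChainLE_of_sublist {ω σ : List B} (hω : cs.IsReduced ω) (hσ : σ.Sublist ω) :
    cs.BruhatChainLE (π σ) (π ω) := by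
  induction ω generalizing σ with
  | nil => rw [List.sublist_nil.mp hσ]; exact .refl
  | cons i ω ih =>
    have hω' : cs.IsReduced ω := by simpa using hω.drop 1
    have hstep : cs.IsBruhatStep (π ω) (s i * π ω) := by
      refine ⟨s i, ⟨cs.isReflection_simple i, ?_⟩, (simple_mul_simple_cancel_left _ _).symm⟩
      rw [simple_mul_simple_cancel_left, ← wordProd_cons, hω.eq, hω'.eq, List.length_cons]
      omega
    rw [wordProd_cons]
    cases hσ with
    | cons _ hσ => exact (ih hω' hσ).tail hstep
    | cons_cons _ hσ =>
      rw [wordProd_cons]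
      exact ((ih hω' hσ).simple_mul_or i).elim (·.tail hstep) id

theorem exists_sublist_of_bruhatChainLE {u w : W} (h : cs.BruhatChainLE u w) {ω : List B}
    (hω : cs.IsReduced ω) (hπ : π ω = w) : ∃ σ, σ.Sublist ω ∧ π σ = u := by
  induction h generalizing ω with
  | refl => exact ⟨ω, .refl ω, hπ⟩
  | tail _ hstep ih =>
    obtain ⟨t, ht, rfl⟩ := hstep
    subst hπ
    obtain ⟨j, -, heq⟩ := cs.exists_eraseIdx_of_isLeftInversion ht
    obtain ⟨τ, hτ, hτred, hτπ⟩ := cs.exists_isReduced_sublist (ω.eraseIdx j)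
    obtain ⟨σ, hσ, rfl⟩ := ih hτred (hτπ.trans heq.symm)
    exact ⟨σ, hσ.trans (hτ.trans (ω.eraseIdx_sublist j)), rfl⟩

end CoxeterSystem

theorem BruhatLE.simple_mul {cs : CoxeterSystem M W} {u w : W} {i : B}
    (hi : cs.length (cs.simple i * w) < cs.length w) (h : BruhatLE cs u w) :
    BruhatLE cs (cs.simple i * u) w := by
  obtain ⟨ω, hω, rfl, σ, hσ, rfl⟩ := h
  have hchain : cs.BruhatChainLE (cs.simple i * cs.wordProd σ) (cs.wordProd ω) :=
    ((cs.bruhatChainLE_of_sublist hω hσ).simple_mul_or i).elim id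
      fun hle => hle.tail (cs.isBruhatStep_simple_mul hi)
  obtain ⟨σ', hσ', hπ⟩ := cs.exists_sublist_of_bruhatChainLE hchain hω rfl
  exact ⟨ω, hω, rfl, σ', hσ', hπ⟩

theorem statement6_general {V : Type*} [AddCommGroup V] [Module ℚ V]
    (cs : CoxeterSystem M W) (S : WeylRootSetup cs V)
    (lam : V)
    (w : W) (i : B) (h : cs.length (cs.simple i * w) + 1 = cs.length w) :
    ⇑(S.ρ (cs.simple i)) ''
        (convexHull ℚ {x : V | ∃ u : W, BruhatLE cs u w ∧ x = S.ρ u lam})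
      = convexHull ℚ {x : V | ∃ u : W, BruhatLE cs u w ∧ x = S.ρ u lam} := by
  have hi : cs.length (cs.simple i * w) < cs.length w := by omega
  have hvertices : ⇑(S.ρ (cs.simple i)) '' {x : V | ∃ u : W, BruhatLE cs u w ∧ x = S.ρ u lam}
      = {x : V | ∃ u : W, BruhatLE cs u w ∧ x = S.ρ u lam} := by
    ext x
    constructor
    · rintro ⟨_, ⟨u, hu, rfl⟩, rfl⟩
      exact ⟨_, hu.simple_mul hi, by rw [map_mul]; rfl⟩
    · rintro ⟨u, hu, rfl⟩
      refine ⟨_, ⟨_, hu.simple_mul hi, rfl⟩, ?_⟩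
      rw [← LinearEquiv.mul_apply, ← map_mul, simple_mul_simple_cancel_left]
  rw [← LinearEquiv.coe_toLinearMap, LinearMap.image_convexHull, LinearEquiv.coe_toLinearMap,
    hvertices]

/-- the Demazure weight polytope `P = conv_ℚ{xλ : x ≤ w}` is stable
under a simple reflection `s` with `sw < w`. -/
theorem statement6 {V : Type*} [AddCommGroup V] [Module ℚ V]
    (cs : CoxeterSystem M W) (S : WeylRootSetup cs V)
    (lam : V) (hdom : ∀ β ∈ S.Φpos, 0 ≤ S.coroot β lam)
    (w : W) (i : B) (h : cs.length (cs.simple i * w) + 1 = cs.length w) :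
    ⇑(S.ρ (cs.simple i)) ''
        (convexHull ℚ {x : V | ∃ u : W, BruhatLE cs u w ∧ x = S.ρ u lam})
      = convexHull ℚ {x : V | ∃ u : W, BruhatLE cs u w ∧ x = S.ρ u lam} :=
  statement6_general cs S lam w i h
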